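/- Consider the 4×4 submatrix D of the Walsh matrix W_8 given by D = [[1,−1,−1,1],[−1,1,−1,1],[−1,−1,1,1],[1,1,1,−1]]. Then D is invertible, and its polar part U = Pol(D) has U_{44} = 0; explicitly U = [[2/3,−1/3,−1/3,1/√3],[−1/3,2/3,−1/3,1/√3],[−1/3,−1/3,2/3,1/√3],[1/√3,1/√3,1/√3,0]]. Consequently D is not an almost Hadamard sign pattern. -/

import Mathlib

/-!
`U` is orthogonal and `UᵀD` is positive semidefinite. Since then `(UᵀD)² = DᵀD`, uniqueness of
positive square roots gives `UᵀD = √(DᵀD)`, so `U` is the polar factor of `D`. Its entry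
`U₄₄ = 0` has sign `0 ≠ D₄₄`.
-/

open Matrix

open scoped ComplexOrder in
/-- The old Mathlib `Matrix.PosSemidef.sqrt` (removed upstream), restated with its former definition. -/
noncomputable def Matrix.PosSemidef.sqrt {n 𝕜 : Type*} [Fintype n] [DecidableEq n] [RCLike 𝕜]
    {A : Matrix n n 𝕜} (hA : A.PosSemidef) : Matrix n n 𝕜 :=
  (hA.1.eigenvectorUnitary : Matrix n n 𝕜) * diagonal ((↑) ∘ Real.sqrt ∘ hA.1.eigenvalues) *
    (star hA.1.eigenvectorUnitary : Matrix n n 𝕜)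

open scoped ComplexOrder

namespace Matrix

variable {n 𝕜 : Type*} [Fintype n] [DecidableEq n] [RCLike 𝕜]

open scoped MatrixOrder in
theorem PosSemidef.sqrt_unique {A S : Matrix n n 𝕜} (hA : A.PosSemidef)
    (hS : S.PosSemidef) (h : S * S = A) : hA.sqrt = S := by
  have hcfc : CFC.sqrt A = S := CFC.sqrt_unique h hS.nonneg
  rw [CFC.sqrt_eq_real_sqrt A hA.nonneg, cfcₙ_eq_cfc, hA.1.cfc_eq] at hcfc
  rw [← hcfc]
  simp [IsHermitian.cfc, PosSemidef.sqrt, Unitary.conjStarAlgAut_apply]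

theorem eq_mul_sqrt_conjTranspose_mul_self {D U : Matrix n n 𝕜} (hU : Uᴴ * U = 1)
    (hUD : (Uᴴ * D).PosSemidef) : D = U * (posSemidef_conjTranspose_mul_self D).sqrt := by
  have hUU : U * Uᴴ = 1 := mul_eq_one_comm.mp hU
  have hsq : (Uᴴ * D) * (Uᴴ * D) = Dᴴ * D := by
    calc (Uᴴ * D) * (Uᴴ * D) = (Uᴴ * D)ᴴ * (Uᴴ * D) := by rw [hUD.1.eq]
      _ = Dᴴ * D := by
        rw [conjTranspose_mul, conjTranspose_conjTranspose, Matrix.mul_assoc, ← Matrix.mul_assoc U,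
          hUU, Matrix.one_mul]
  rw [PosSemidef.sqrt_unique _ hUD hsq, ← Matrix.mul_assoc, hUU, Matrix.one_mul]

end Matrix

noncomputable def walshSubmatrix : Matrix (Fin 4) (Fin 4) ℝ :=
  !![1, -1, -1, 1; -1, 1, -1, 1; -1, -1, 1, 1; 1, 1, 1, -1]

noncomputable def walshSubmatrixPolar : Matrix (Fin 4) (Fin 4) ℝ :=
  !![2/3, -1/3, -1/3, (Real.sqrt 3)⁻¹;
     -1/3, 2/3, -1/3, (Real.sqrt 3)⁻¹;
     -1/3, -1/3, 2/3, (Real.sqrt 3)⁻¹;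
     (Real.sqrt 3)⁻¹, (Real.sqrt 3)⁻¹, (Real.sqrt 3)⁻¹, 0]

/-- `√(DᵀD)` for `D = walshSubmatrix` is the value at `r = 1/√3`. -/
noncomputable def walshSubmatrixModulus (r : ℝ) : Matrix (Fin 4) (Fin 4) ℝ :=
  !![4/3 + r, -2/3 + r, -2/3 + r, -r;
     -2/3 + r, 4/3 + r, -2/3 + r, -r;
     -2/3 + r, -2/3 + r, 4/3 + r, -r;
     -r, -r, -r, 3 * r]

theorem walshSubmatrix_mul_eq_one :
    walshSubmatrix * !![1/2, 0, 0, 1/2; 0, 1/2, 0, 1/2; 0, 0, 1/2, 1/2; 1/2, 1/2, 1/2, 1/2] = 1 := by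
  ext i j
  fin_cases i <;> fin_cases j <;>
    simp [walshSubmatrix, mul_apply, Fin.sum_univ_four, one_apply] <;> norm_num

theorem isUnit_det_walshSubmatrix : IsUnit walshSubmatrix.det :=
  isUnit_det_of_right_inverse walshSubmatrix_mul_eq_one

theorem transpose_walshSubmatrixPolar_mul_self :
    walshSubmatrixPolarᵀ * walshSubmatrixPolar = 1 := by
  have hinv_sq : (Real.sqrt 3)⁻¹ * (Real.sqrt 3)⁻¹ = 1 / 3 := by
    rw [← mul_inv, Real.mul_self_sqrt (by norm_num), one_div]
  ext i j
  fin_cases i <;> fin_cases j <;>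
    simp [walshSubmatrixPolar, mul_apply, Fin.sum_univ_four, one_apply] <;> linarith

theorem transpose_walshSubmatrixPolar_mul_walshSubmatrix :
    walshSubmatrixPolarᵀ * walshSubmatrix = walshSubmatrixModulus (Real.sqrt 3)⁻¹ := by
  ext i j
  fin_cases i <;> fin_cases j <;>
    simp [walshSubmatrixPolar, walshSubmatrix, walshSubmatrixModulus, mul_apply,
      Fin.sum_univ_four] <;> ring

theorem walshSubmatrixModulus_posSemidef {r : ℝ} (hr : 0 ≤ r) :
    (walshSubmatrixModulus r).PosSemidef := by
  refine PosSemidef.of_dotProduct_mulVec_nonneg ?_ fun x ↦ ?_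
  · ext i j
    fin_cases i <;> fin_cases j <;> simp [walshSubmatrixModulus]
  · have hform : star x ⬝ᵥ walshSubmatrixModulus r *ᵥ x =
        2 / 3 * ((x 0 - x 1) ^ 2 + (x 1 - x 2) ^ 2 + (x 0 - x 2) ^ 2)
          + r * (x 0 + x 1 + x 2 - x 3) ^ 2 + 2 * r * x 3 ^ 2 := by
      simp [walshSubmatrixModulus, dotProduct, mulVec, Fin.sum_univ_four]
      ring
    rw [hform]
    positivity

theorem walshSubmatrix_apply_three_three : walshSubmatrix 3 3 = -1 := rfl

theorem walshSubmatrixPolar_apply_three_three : walshSubmatrixPolar 3 3 = 0 := rfl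

/-- The `4×4` submatrix `D` of the Walsh matrix `W₈` given below is
invertible, its polar part
`U = [[2/3,−1/3,−1/3,1/√3],[−1/3,2/3,−1/3,1/√3],[−1/3,−1/3,2/3,1/√3],[1/√3,1/√3,1/√3,0]]`
(orthogonal, with `U·√(DᵗD) = D`) has `U₄₄ = 0`; consequently `D` is not an
almost Hadamard sign pattern (the sign condition `sgn(Uᵢⱼ) = Dᵢⱼ` fails). -/
theorem stmt_19 :
    letI D : Matrix (Fin 4) (Fin 4) ℝ :=
      !![1, -1, -1, 1; -1, 1, -1, 1; -1, -1, 1, 1; 1, 1, 1, -1]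
    letI U : Matrix (Fin 4) (Fin 4) ℝ :=
      !![2/3, -1/3, -1/3, (Real.sqrt 3)⁻¹;
         -1/3, 2/3, -1/3, (Real.sqrt 3)⁻¹;
         -1/3, -1/3, 2/3, (Real.sqrt 3)⁻¹;
         (Real.sqrt 3)⁻¹, (Real.sqrt 3)⁻¹, (Real.sqrt 3)⁻¹, 0]
    IsUnit D.det ∧ Uᵀ * U = 1 ∧
      D = U * Matrix.PosSemidef.sqrt (Matrix.posSemidef_conjTranspose_mul_self D) ∧
      U 3 3 = 0 ∧ ¬(∀ i j, Real.sign (U i j) = D i j) := by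
  have hpolar : walshSubmatrix =
      walshSubmatrixPolar * (posSemidef_conjTranspose_mul_self walshSubmatrix).sqrt :=
    eq_mul_sqrt_conjTranspose_mul_self transpose_walshSubmatrixPolar_mul_self <| by
      rw [conjTranspose_eq_transpose_of_trivial, transpose_walshSubmatrixPolar_mul_walshSubmatrix]
      exact walshSubmatrixModulus_posSemidef (by positivity)
  refine ⟨isUnit_det_walshSubmatrix, transpose_walshSubmatrixPolar_mul_self, hpolar,
    walshSubmatrixPolar_apply_three_three, fun hsign ↦ ?_⟩
  have h33 : Real.sign (walshSubmatrixPolar 3 3) = walshSubmatrix 3 3 := hsign 3 3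
  rw [walshSubmatrixPolar_apply_three_three, Real.sign_zero, walshSubmatrix_apply_three_three]
    at h33
  norm_num at h33
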